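/- Let V be a vector space over a field K with a distinguished element 1 ∈ V, and m: V ⊗ V → V a linear map satisfying m(v ⊗ 1) = v for all v ∈ V. Define σ^m: V ⊗ V → V ⊗ V by σ^m(v ⊗ w) = 1 ⊗ m(v ⊗ w). Then m is associative if and only if σ^m satisfies the braid relation (σ^m ⊗ id)(id ⊗ σ^m)(σ^m ⊗ id) = (id ⊗ σ^m)(σ^m ⊗ id)(id ⊗ σ^m) on V ⊗ V ⊗ V. -/

import Mathlib

/-!
On pure tensors `σ^m ⊗ id` sends `u ⊗ v ⊗ w` to `1 ⊗ uv ⊗ w` and `id ⊗ σ^m` sends it to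
`u ⊗ 1 ⊗ vw`. Using the right unit, the two sides of the braid relation therefore send
`u ⊗ v ⊗ w` to `1 ⊗ 1 ⊗ (uv)w` and `1 ⊗ 1 ⊗ u(vw)`, and `x ↦ 1 ⊗ 1 ⊗ x` is injective because
`m ∘ comm` is a retraction of `x ↦ 1 ⊗ x`.
-/

open TensorProduct LinearMap

namespace TensorProduct

variable {R M N P Q : Type*} [CommSemiring R] [AddCommMonoid M] [AddCommMonoid N]
  [AddCommMonoid P] [AddCommMonoid Q] [Module R M] [Module R N] [Module R P] [Module R Q]

theorem ext_threefold'_iff {g h : M ⊗[R] (N ⊗[R] P) →ₗ[R] Q} :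
    g = h ↔ ∀ x y z, g (x ⊗ₜ (y ⊗ₜ z)) = h (x ⊗ₜ (y ⊗ₜ z)) :=
  ⟨fun hgh _ _ _ => hgh ▸ rfl, ext_threefold'⟩

end TensorProduct

namespace RightUnitalMul

variable {R V : Type*} [CommSemiring R] [AddCommMonoid V] [Module R V]
  {one : V} {m : V ⊗[R] V →ₗ[R] V}

theorem one_tmul_one_tmul_injective (hone : ∀ v, m (v ⊗ₜ one) = v) :
    Function.Injective (fun x : V => one ⊗ₜ[R] (one ⊗ₜ[R] x)) :=
  let r := m ∘ₗ (TensorProduct.comm R V V).toLinearMap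
  Function.LeftInverse.injective (g := r ∘ₗ lTensor V r) fun x => by
    simp [r, hone]

variable (one m) in
def braiding : V ⊗[R] V →ₗ[R] V ⊗[R] V :=
  (TensorProduct.mk R V V one).comp m

def rTensorAssoc (f : V ⊗[R] V →ₗ[R] V ⊗[R] V) :
    V ⊗[R] (V ⊗[R] V) →ₗ[R] V ⊗[R] (V ⊗[R] V) :=
  (TensorProduct.assoc R V V V).toLinearMap ∘ₗ rTensor V f ∘ₗ
    (TensorProduct.assoc R V V V).symm.toLinearMap

theorem rTensorAssoc_braiding_tmul (u v w : V) :
    rTensorAssoc (braiding one m) (u ⊗ₜ (v ⊗ₜ w)) = one ⊗ₜ (m (u ⊗ₜ v) ⊗ₜ w) := by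
  simp [rTensorAssoc, braiding]

theorem lTensor_braiding_tmul (u v w : V) :
    lTensor V (braiding one m) (u ⊗ₜ (v ⊗ₜ w)) = u ⊗ₜ (one ⊗ₜ m (v ⊗ₜ w)) := by
  simp [braiding]

theorem braid_left_tmul (hone : ∀ v, m (v ⊗ₜ one) = v) (u v w : V) :
    (rTensorAssoc (braiding one m) ∘ₗ lTensor V (braiding one m) ∘ₗ
        rTensorAssoc (braiding one m)) (u ⊗ₜ (v ⊗ₜ w)) =
      one ⊗ₜ (one ⊗ₜ m (m (u ⊗ₜ v) ⊗ₜ w)) := by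
  simp only [coe_comp, Function.comp_apply, rTensorAssoc_braiding_tmul, lTensor_braiding_tmul,
    hone]

theorem braid_right_tmul (hone : ∀ v, m (v ⊗ₜ one) = v) (u v w : V) :
    (lTensor V (braiding one m) ∘ₗ rTensorAssoc (braiding one m) ∘ₗ
        lTensor V (braiding one m)) (u ⊗ₜ (v ⊗ₜ w)) =
      one ⊗ₜ (one ⊗ₜ m (u ⊗ₜ m (v ⊗ₜ w))) := by
  simp only [coe_comp, Function.comp_apply, rTensorAssoc_braiding_tmul, lTensor_braiding_tmul,
    hone]

end RightUnitalMul

open RightUnitalMul in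
/-- Lebed's criterion: for `m : V ⊗ V → V` with a right unit `1` (`m(v ⊗ 1) = v`), letting
`σ^m (v ⊗ w) = 1 ⊗ m(v ⊗ w)`, the map `m` is associative if and only if `σ^m` satisfies the
braid relation `(σ^m⊗id)(id⊗σ^m)(σ^m⊗id) = (id⊗σ^m)(σ^m⊗id)(id⊗σ^m)` on `V ⊗ V ⊗ V`
(equivalently, `σ_1 ↦ σ^m ⊗ id`, `σ_2 ↦ id ⊗ σ^m` defines a representation of `B_3⁺`). -/
theorem assoc_iff_braid (K V : Type*) [Field K] [AddCommGroup V] [Module K V]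
    (one : V) (m : V ⊗[K] V →ₗ[K] V) (hone : ∀ v : V, m (v ⊗ₜ one) = v) :
    letI σm : V ⊗[K] V →ₗ[K] V ⊗[K] V := (TensorProduct.mk K V V one).comp m
    letI A1 : V ⊗[K] (V ⊗[K] V) →ₗ[K] V ⊗[K] (V ⊗[K] V) :=
      (TensorProduct.assoc K V V V).toLinearMap ∘ₗ (rTensor V σm) ∘ₗ
        (TensorProduct.assoc K V V V).symm.toLinearMap
    letI A2 : V ⊗[K] (V ⊗[K] V) →ₗ[K] V ⊗[K] (V ⊗[K] V) := lTensor V σm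
    ((m ∘ₗ (rTensor V m) ∘ₗ (TensorProduct.assoc K V V V).symm.toLinearMap
        = m ∘ₗ lTensor V m) ↔
      (A1 ∘ₗ A2 ∘ₗ A1 = A2 ∘ₗ A1 ∘ₗ A2)) := by
  change _ ↔ rTensorAssoc (braiding one m) ∘ₗ lTensor V (braiding one m) ∘ₗ
      rTensorAssoc (braiding one m) =
    lTensor V (braiding one m) ∘ₗ rTensorAssoc (braiding one m) ∘ₗ lTensor V (braiding one m)
  simp only [ext_threefold'_iff, braid_left_tmul hone, braid_right_tmul hone,
    (one_tmul_one_tmul_injective hone).eq_iff]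
  simp
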